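/- Let D be an arbitrary subset of ℤ^n that admits a least majorized element. Then for any x ∈ D, the following are equivalent: (A) x is least majorized in D; (B) x is decreasingly minimal in D; (C) x is increasingly maximal in D. -/
import Mathlib


open Finset

/-- `x` rearranged in increasing order. -/
noncomputable def sortAsc {n : ℕ} (x : Fin n → ℤ) : Fin n → ℤ :=
  fun i => x (Tuple.sort x i)

/-- `x` rearranged in decreasing order (the vector `x↓`). -/
noncomputable def sortDesc {n : ℕ} (x : Fin n → ℤ) : Fin n → ℤ :=
  fun i => sortAsc x i.rev

/-- `x̄(k)`: the sum of the `k` largest components of `x`. -/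
noncomputable def psum {n : ℕ} (x : Fin n → ℤ) (k : ℕ) : ℤ :=
  ∑ i : Fin n, if (i : ℕ) < k then sortDesc x i else 0

/-- `x ≺ y`: `x` is majorized by `y`. -/
def Majorize {n : ℕ} (x y : Fin n → ℤ) : Prop :=
  (∀ k : ℕ, k < n → psum x k ≤ psum y k) ∧ psum x n = psum y n

/-- `x` and `y` are value-equivalent: `x↓ = y↓`. -/
def ValueEquiv {n : ℕ} (x y : Fin n → ℤ) : Prop :=
  sortDesc x = sortDesc y

/-- `x ≤_dec y`: `x` is decreasingly smaller than or value-equivalent to `y`. -/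
def DecLE {n : ℕ} (x y : Fin n → ℤ) : Prop :=
  ValueEquiv x y ∨
    ∃ j : Fin n, (∀ i : Fin n, i < j → sortDesc x i = sortDesc y i) ∧
      sortDesc x j < sortDesc y j

/-- `x <_dec y`: `x` is decreasingly smaller than `y`. -/
def DecLT {n : ℕ} (x y : Fin n → ℤ) : Prop :=
  ∃ j : Fin n, (∀ i : Fin n, i < j → sortDesc x i = sortDesc y i) ∧
    sortDesc x j < sortDesc y j

/-- `x ≥_inc y`: `x` is increasingly larger than or value-equivalent to `y`. -/
def IncGE {n : ℕ} (x y : Fin n → ℤ) : Prop :=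
  ValueEquiv x y ∨
    ∃ j : Fin n, (∀ i : Fin n, i < j → sortAsc x i = sortAsc y i) ∧
      sortAsc x j > sortAsc y j

/-- `x` is a least majorized element of `D`. -/
def LeastMajorized {n : ℕ} (D : Set (Fin n → ℤ)) (x : Fin n → ℤ) : Prop :=
  x ∈ D ∧ ∀ y ∈ D, Majorize x y

/-- `x` is a decreasingly minimal (dec-min) element of `D`. -/
def DecMin {n : ℕ} (D : Set (Fin n → ℤ)) (x : Fin n → ℤ) : Prop :=
  x ∈ D ∧ ∀ y ∈ D, DecLE x y

/-- `x` is an increasingly maximal (inc-max) element of `D`. -/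
def IncMax {n : ℕ} (D : Set (Fin n → ℤ)) (x : Fin n → ℤ) : Prop :=
  x ∈ D ∧ ∀ y ∈ D, IncGE x y

lemma sortAsc_eq_sortDesc_rev {n : ℕ} (x : Fin n → ℤ) (i : Fin n) :
    sortAsc x i = sortDesc x i.rev := by
  unfold sortDesc; rw [Fin.rev_rev]

lemma psum_succ {n : ℕ} (x : Fin n → ℤ) (k : ℕ) (hk : k < n) :
    psum x (k + 1) = psum x k + sortDesc x ⟨k, hk⟩ := by
  unfold psum
  have key : ∀ i : Fin n, (if (i : ℕ) < k + 1 then sortDesc x i else 0)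
      = (if (i : ℕ) < k then sortDesc x i else 0)
        + (if (i : ℕ) = k then sortDesc x i else 0) := by
    intro i
    rcases Nat.lt_trichotomy (i : ℕ) k with h | h | h
    · rw [if_pos (by omega), if_pos h, if_neg (by omega)]; ring
    · rw [if_pos (by omega), if_neg (by omega), if_pos h]; ring
    · rw [if_neg (by omega), if_neg (by omega), if_neg (by omega)]; ring
  rw [Finset.sum_congr rfl fun i _ => key i, Finset.sum_add_distrib]
  congr 1
  rw [Finset.sum_eq_single (⟨k, hk⟩ : Fin n)]
  · simp
  · intro b _ hb
    rw [if_neg]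
    simpa [Fin.ext_iff] using hb
  · intro h; exact absurd (Finset.mem_univ _) h

lemma psum_top {n : ℕ} (x : Fin n → ℤ) :
    psum x n = ∑ i : Fin n, sortDesc x i := by
  unfold psum
  exact Finset.sum_congr rfl fun i _ => if_pos i.isLt

lemma psum_split {n : ℕ} (x : Fin n → ℤ) (m : ℕ) :
    psum x n = psum x m + ∑ i : Fin n, (if m ≤ (i : ℕ) then sortDesc x i else 0) := by
  rw [psum_top]
  unfold psum
  rw [← Finset.sum_add_distrib]
  refine Finset.sum_congr rfl fun i _ => ?_
  by_cases h : (i : ℕ) < m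
  · rw [if_pos h, if_neg (by omega)]; ring
  · rw [if_neg h, if_pos (by omega)]; ring

lemma psum_eq_of_prefix {n : ℕ} {x y : Fin n → ℤ} {j : Fin n}
    (h : ∀ i : Fin n, i < j → sortDesc x i = sortDesc y i) :
    psum x (j : ℕ) = psum y (j : ℕ) := by
  unfold psum
  refine Finset.sum_congr rfl fun i _ => ?_
  by_cases hi : (i : ℕ) < (j : ℕ)
  · rw [if_pos hi, if_pos hi, h i (Fin.lt_def.mpr hi)]
  · rw [if_neg hi, if_neg hi]

lemma valueEquiv_symm {n : ℕ} {x y : Fin n → ℤ} (h : ValueEquiv x y) : ValueEquiv y x := by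
  unfold ValueEquiv at *; exact h.symm

lemma psum_congr {n : ℕ} {x y : Fin n → ℤ} (hv : ValueEquiv x y) (k : ℕ) :
    psum x k = psum y k := by
  unfold ValueEquiv at hv
  unfold psum
  rw [hv]

lemma majorize_decLE {n : ℕ} {x y : Fin n → ℤ} (h : Majorize x y) : DecLE x y := by
  by_cases hv : ValueEquiv x y
  · exact Or.inl hv
  right
  have hne : ∃ i, sortDesc x i ≠ sortDesc y i := by
    by_contra hc; push_neg at hc; exact hv (funext hc)
  set S := Finset.univ.filter (fun i => sortDesc x i ≠ sortDesc y i) with hSdef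
  have hS : S.Nonempty := ⟨hne.choose, by simp [hSdef, hne.choose_spec]⟩
  set j := S.min' hS with hj
  have hjS : j ∈ S := S.min'_mem hS
  have hjne : sortDesc x j ≠ sortDesc y j := by
    simpa [hSdef] using hjS
  have hpre : ∀ i : Fin n, i < j → sortDesc x i = sortDesc y i := by
    intro i hi
    by_contra hc
    have hiS : i ∈ S := by simp [hSdef, hc]
    exact absurd (S.min'_le i hiS) (not_le.mpr hi)
  refine ⟨j, hpre, ?_⟩
  have hpj : psum x (j : ℕ) = psum y (j : ℕ) := psum_eq_of_prefix hpre
  have hps : psum x ((j : ℕ) + 1) ≤ psum y ((j : ℕ) + 1) := by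
    rcases Nat.lt_or_ge ((j : ℕ) + 1) n with hlt | hge
    · exact h.1 _ hlt
    · have : (j : ℕ) + 1 = n := le_antisymm (j.isLt) hge
      rw [this]; exact le_of_eq h.2
  have hx1 := psum_succ x (j : ℕ) j.isLt
  have hy1 := psum_succ y (j : ℕ) j.isLt
  simp only [Fin.eta] at hx1 hy1
  have hle : sortDesc x j ≤ sortDesc y j := by linarith
  exact lt_of_le_of_ne hle hjne

lemma majorize_incGE {n : ℕ} {x y : Fin n → ℤ} (h : Majorize x y) : IncGE x y := by
  by_cases hv : ValueEquiv x y
  · exact Or.inl hv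
  right
  have hne : ∃ i, sortDesc x i ≠ sortDesc y i := by
    by_contra hc; push_neg at hc; exact hv (funext hc)
  set S := Finset.univ.filter (fun i => sortDesc x i ≠ sortDesc y i) with hSdef
  have hS : S.Nonempty := ⟨hne.choose, by simp [hSdef, hne.choose_spec]⟩
  set j := S.max' hS with hj
  have hjS : j ∈ S := S.max'_mem hS
  have hjne : sortDesc x j ≠ sortDesc y j := by
    simpa [hSdef] using hjS
  have htail : ∀ i : Fin n, (j : ℕ) + 1 ≤ (i : ℕ) → sortDesc x i = sortDesc y i := by
    intro i hi
    by_contra hc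
    have hiS : i ∈ S := by simp [hSdef, hc]
    have hle := S.le_max' i hiS
    rw [← hj] at hle
    have : (i : ℕ) ≤ (j : ℕ) := hle
    omega
  have hT : ∑ i : Fin n, (if (j : ℕ) + 1 ≤ (i : ℕ) then sortDesc x i else 0)
      = ∑ i : Fin n, (if (j : ℕ) + 1 ≤ (i : ℕ) then sortDesc y i else 0) :=
    Finset.sum_congr rfl fun i _ => by
      by_cases hi : (j : ℕ) + 1 ≤ (i : ℕ)
      · rw [if_pos hi, if_pos hi, htail i hi]
      · rw [if_neg hi, if_neg hi]
  have hsplitx := psum_split x ((j : ℕ) + 1)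
  have hsplity := psum_split y ((j : ℕ) + 1)
  have hsum : psum x ((j : ℕ) + 1) = psum y ((j : ℕ) + 1) := by
    have h2 := h.2; linarith [hT, hsplitx, hsplity]
  have hle : psum x (j : ℕ) ≤ psum y (j : ℕ) := h.1 _ j.isLt
  have hx1 := psum_succ x (j : ℕ) j.isLt
  have hy1 := psum_succ y (j : ℕ) j.isLt
  simp only [Fin.eta] at hx1 hy1
  have hgt : sortDesc y j < sortDesc x j := by
    have hle2 : sortDesc y j ≤ sortDesc x j := by linarith
    exact lt_of_le_of_ne hle2 (fun hc => hjne hc.symm)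
  refine ⟨j.rev, ?_, ?_⟩
  · intro i' hi'
    have hji : j < i'.rev := by
      rw [← Fin.rev_rev j]; exact Fin.rev_lt_rev.mpr hi'
    rw [sortAsc_eq_sortDesc_rev, sortAsc_eq_sortDesc_rev]
    exact htail i'.rev (by have := Fin.lt_def.mp hji; omega)
  · show sortAsc x j.rev > sortAsc y j.rev
    rw [sortAsc_eq_sortDesc_rev, sortAsc_eq_sortDesc_rev, Fin.rev_rev]
    exact hgt

lemma decLE_antisymm {n : ℕ} {x y : Fin n → ℤ} (h1 : DecLE x y) (h2 : DecLE y x) :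
    ValueEquiv x y := by
  rcases h1 with hv | ⟨j, hpre, hlt⟩
  · exact hv
  rcases h2 with hv | ⟨j', hpre', hlt'⟩
  · exact valueEquiv_symm hv
  exfalso
  rcases lt_trichotomy j j' with h | h | h
  · have := hpre' j h; linarith
  · subst h; linarith
  · have := hpre j' h; linarith

lemma incGE_antisymm {n : ℕ} {x y : Fin n → ℤ} (h1 : IncGE x y) (h2 : IncGE y x) :
    ValueEquiv x y := by
  rcases h1 with hv | ⟨j, hpre, hlt⟩
  · exact hv
  rcases h2 with hv | ⟨j', hpre', hlt'⟩
  · exact valueEquiv_symm hv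
  exfalso
  rcases lt_trichotomy j j' with h | h | h
  · have := hpre' j h; linarith
  · subst h; linarith
  · have := hpre j' h; linarith

lemma leastMajorized_of_valueEquiv {n : ℕ} {D : Set (Fin n → ℤ)} {x z : Fin n → ℤ}
    (hv : ValueEquiv x z) (hz : LeastMajorized D z) (hx : x ∈ D) : LeastMajorized D x := by
  refine ⟨hx, fun y hy => ?_⟩
  obtain ⟨h1, h2⟩ := hz.2 y hy
  constructor
  · intro k hk; rw [psum_congr hv k]; exact h1 k hk
  · rw [psum_congr hv n]; exact h2

theorem leastMajorized_iff_decMin_iff_incMax {n : ℕ} (D : Set (Fin n → ℤ))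
    (hD : ∃ z, LeastMajorized D z) (x : Fin n → ℤ) (hx : x ∈ D) :
    (LeastMajorized D x ↔ DecMin D x) ∧ (DecMin D x ↔ IncMax D x) := by
  obtain ⟨z, hz⟩ := hD
  have hAB : LeastMajorized D x ↔ DecMin D x := by
    constructor
    · intro hA; exact ⟨hx, fun y hy => majorize_decLE (hA.2 y hy)⟩
    · intro hB
      have hv : ValueEquiv x z := decLE_antisymm (hB.2 z hz.1) (majorize_decLE (hz.2 x hx))
      exact leastMajorized_of_valueEquiv hv hz hx
  have hAC : LeastMajorized D x ↔ IncMax D x := by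
    constructor
    · intro hA; exact ⟨hx, fun y hy => majorize_incGE (hA.2 y hy)⟩
    · intro hC
      have hv : ValueEquiv x z := incGE_antisymm (hC.2 z hz.1) (majorize_incGE (hz.2 x hx))
      exact leastMajorized_of_valueEquiv hv hz hx
  exact ⟨hAB, hAB.symm.trans hAC⟩
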